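/- arXiv:1802.07092 — 2 statements merged into one kernel-verified Lean document; each statement's English description precedes it below -/
import Mathlib

section
/- Let Ω be an open subset of ℝⁿ, S = Ω − Ω = {x − y : x, y ∈ Ω}, and let f : S → ℂ be a positive definite function in the usual sense, i.e. k(x,y) := f(x − y) is a positive definite kernel on Ω. Then f is continuous on S if and only if Re(f) is continuous at the origin 0 ∈ S. -/
open Filter Topology ComplexOrder

open ComplexConjugate Pointwise

/-!
For a positive definite kernel `k`, the Gram form of the three points `b, x, a` with weights
`1, w, -w` is a nonnegative quadratic in `w`, whence
`|k x b - k a b|² ≤ k b b · (k x x + k a a - 2 Re k x a)`.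
For `k x y = f (x - y)` and `x = z + b` this reads
`|f z - f (a - b)|² ≤ 2 f 0 · (f 0 - Re f (z - (a - b)))`, so continuity of `Re f` at `0` forces continuity of `f` at every point `a - b` of `Ω - Ω`.
-/

def IsPosDefKernel {α : Type*} (k : α → α → ℂ) : Prop :=
  ∀ (m : ℕ) (x : Fin m → α) (ξ : Fin m → ℂ), 0 ≤ ∑ i, ∑ j, k (x i) (x j) * ξ i * conj (ξ j)

theorem Complex.normSq_le_mul_of_forall_nonneg {A B : ℝ} {D : ℂ}
    (h : ∀ w : ℂ, 0 ≤ A + 2 * (D * w).re + Complex.normSq w * B) :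
    Complex.normSq D ≤ A * B := by
  have hconj : ∀ t : ℝ, 0 ≤ (Complex.normSq D * B) * (t * t) + (-2 * Complex.normSq D) * t + A := by
    intro t
    have := h (-t * conj D)
    rw [mul_left_comm, Complex.mul_conj, Complex.normSq_mul, Complex.normSq_neg,
      Complex.normSq_ofReal, Complex.normSq_conj] at this
    simp only [← Complex.ofReal_mul, ← Complex.ofReal_neg, Complex.ofReal_re] at this
    linarith
  have hreal : ∀ t : ℝ, 0 ≤ B * (t * t) + 2 * D.re * t + A := by
    intro t
    have := h t
    simp only [Complex.mul_re, Complex.ofReal_re, Complex.ofReal_im, Complex.normSq_ofReal] at this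
    linarith
  -- `hreal` only matters when `D = 0`, where it yields `0 ≤ A * B`
  have h₁ := discrim_le_zero hconj
  have h₂ := discrim_le_zero hreal
  simp only [discrim] at h₁ h₂
  rcases (Complex.normSq_nonneg D).eq_or_lt with hD | hD
  · rw [← hD]; nlinarith [sq_nonneg D.re]
  · nlinarith

namespace IsPosDefKernel

variable {α : Type*} {k : α → α → ℂ}

theorem zero_le_apply_self (hk : IsPosDefKernel k) (x : α) : 0 ≤ k x x := by
  simpa using hk 1 ![x] ![1]

theorem apply_swap (hk : IsPosDefKernel k) (x y : α) : k y x = conj (k x y) := by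
  have hx := Complex.le_def.mp (hk.zero_le_apply_self x)
  have hy := Complex.le_def.mp (hk.zero_le_apply_self y)
  have h₁ := Complex.le_def.mp (hk 2 ![x, y] ![1, 1])
  have h₂ := Complex.le_def.mp (hk 2 ![x, y] ![1, Complex.I])
  simp only [Fin.sum_univ_two, Matrix.cons_val_zero, Matrix.cons_val_one,
    Matrix.cons_val_fin_one, map_one, mul_one, Complex.conj_I, mul_neg, Complex.zero_re,
    Complex.zero_im, Complex.add_re, Complex.add_im, Complex.neg_re, Complex.neg_im,
    Complex.mul_re, Complex.mul_im, Complex.I_re, Complex.I_im, mul_zero, zero_sub, neg_neg,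
    add_zero] at hx hy h₁ h₂
  apply Complex.ext <;> simp only [Complex.conj_re, Complex.conj_im] <;> linarith

theorem re_three_point_nonneg (hk : IsPosDefKernel k) (x a b : α) (w : ℂ) :
    0 ≤ (k b b).re + 2 * ((k x b - k a b) * w).re
      + Complex.normSq w * ((k x x).re + (k a a).re - 2 * (k x a).re) := by
  have h := (Complex.le_def.mp (hk 3 ![b, x, a] ![1, w, -w])).1
  simp only [Fin.sum_univ_three, Matrix.cons_val_zero, Matrix.cons_val_one,
    Matrix.cons_val_two, Matrix.head_cons, Matrix.tail_cons] at h
  rw [hk.apply_swap x b, hk.apply_swap a b, hk.apply_swap x a] at h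
  simp only [Complex.add_re, Complex.mul_re, Complex.mul_im, Complex.sub_re, Complex.sub_im,
    Complex.neg_re, Complex.neg_im, Complex.conj_re, Complex.conj_im, Complex.one_re,
    Complex.one_im, Complex.zero_re, Complex.normSq_apply] at h ⊢
  linarith

theorem normSq_sub_le (hk : IsPosDefKernel k) (x a b : α) :
    Complex.normSq (k x b - k a b) ≤ (k b b).re * ((k x x).re + (k a a).re - 2 * (k x a).re) :=
  Complex.normSq_le_mul_of_forall_nonneg (hk.re_three_point_nonneg x a b)

theorem continuousOn_sub_of_continuousWithinAt_re {G : Type*} [AddCommGroup G]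
    [TopologicalSpace G] [IsTopologicalAddGroup G] {Ω : Set G} (hΩ : IsOpen Ω) {f : G → ℂ}
    (hf : IsPosDefKernel fun x y : Ω => f (x - y))
    (hre : ContinuousWithinAt (fun z => (f z).re) (Ω - Ω) 0) :
    ContinuousOn f (Ω - Ω) := by
  rintro _ ⟨a, ha, b, hb, rfl⟩
  set c := (f 0).re
  have hbound : ∀ z, z + b ∈ Ω →
      ‖f z - f (a - b)‖ ≤ √(c * (2 * c - 2 * (f (z - (a - b))).re)) := by
    intro z hz
    have h := hf.normSq_sub_le ⟨z + b, hz⟩ ⟨a, ha⟩ ⟨b, hb⟩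
    simp only [sub_self, add_sub_cancel_right] at h
    rw [sub_sub_eq_add_sub]
    refine Real.le_sqrt_of_sq_le ?_
    rw [← Complex.normSq_eq_norm_sq]
    linarith
  have hmem : ∀ᶠ z in 𝓝[Ω - Ω] (a - b), z + b ∈ Ω := by
    refine nhdsWithin_le_nhds (((continuous_add_const b).tendsto (a - b)) ?_)
    simpa using hΩ.mem_nhds ha
  have hshift : Tendsto (fun z => z - (a - b)) (𝓝[Ω - Ω] (a - b)) (𝓝[Ω - Ω] 0) := by
    refine tendsto_nhdsWithin_iff.mpr ⟨?_, ?_⟩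
    · simpa using ((continuous_sub_right (a - b)).tendsto (a - b)).mono_left nhdsWithin_le_nhds
    · filter_upwards [hmem] with z hz
      exact ⟨z + b, hz, a, ha, (sub_sub_eq_add_sub z a b).symm⟩
  have hsqrt : Tendsto (fun z => √(c * (2 * c - 2 * (f (z - (a - b))).re)))
      (𝓝[Ω - Ω] (a - b)) (𝓝 0) := by
    have := ((hre.tendsto.comp hshift).const_mul 2).const_sub (2 * c) |>.const_mul c |>.sqrt
    rwa [sub_self, mul_zero, Real.sqrt_zero] at this
  refine tendsto_iff_norm_sub_tendsto_zero.mpr (squeeze_zero' ?_ ?_ hsqrt)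
  · exact Eventually.of_forall fun _ => norm_nonneg _
  · filter_upwards [hmem] with z hz using hbound z hz

end IsPosDefKernel

/-- A positive definite function on `S = Ω − Ω ⊆ ℝⁿ` is continuous on `S`
iff its real part is continuous at the origin. -/
theorem stmt4 (n : ℕ) (Ω : Set (Fin n → ℝ)) (hΩ : IsOpen Ω)
    (S : Set (Fin n → ℝ)) (hS : S = {z | ∃ x ∈ Ω, ∃ y ∈ Ω, z = x - y})
    (f : (Fin n → ℝ) → ℂ)
    (hpd : ∀ (m : ℕ) (x : Fin m → (Fin n → ℝ)), (∀ i, x i ∈ Ω) → ∀ ξ : Fin m → ℂ,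
      0 ≤ ∑ i, ∑ j, f (x i - x j) * ξ i * (starRingEnd ℂ) (ξ j)) :
    ContinuousOn f S ↔ ContinuousWithinAt (fun z => (f z).re) S 0 := by
  obtain rfl : S = Ω - Ω := by
    ext z
    simp only [hS, Set.mem_ofPred_eq, Set.mem_sub, eq_comm]
  have hk : IsPosDefKernel fun x y : Ω => f (x - y) :=
    fun m x ξ => hpd m (fun i => x i) (fun i => (x i).2) ξ
  refine ⟨fun hf => ?_, hk.continuousOn_sub_of_continuousWithinAt_re hΩ⟩
  rcases Ω.eq_empty_or_nonempty with rfl | ⟨a, ha⟩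
  · simp [ContinuousWithinAt]
  · exact Complex.continuous_re.continuousAt.comp_continuousWithinAt
      (hf 0 ⟨a, ha, a, ha, sub_self a⟩)
end

section
/- Let Ω ⊆ ℂ be open, let S = codiff(Ω) = {x − conj(y) : x, y ∈ Ω} (an open subset of ℂ), and let f : S → ℂ be a positive definite function, i.e. k(x,y) := f(x − conj(y)) is a positive definite kernel on Ω. If f is holomorphic (complex differentiable) on some open set U with D_Ω(S) ⊆ U ⊆ S, where D_Ω(S) = {x − conj(x) : x ∈ Ω}, then f is holomorphic on all of S. -/
/-!
Write `z = a - conj b` with `a, b ∈ Ω`. For small `s, t ≠ 0` the weights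
`s⁻¹, -t⁻¹, t⁻¹ - s⁻¹` at the points `a + s, a + t, a`, paired through the kernel with the
point `b`, produce the difference `D s - D t` of two difference quotients of `f` at `z`.
Cauchy–Schwarz for the positive definite kernel bounds `‖D s - D t‖²` by
`Q(s, t) · f (b - conj b)`, where `Q(s, t)` pairs the weights with themselves and so only sees
values of `f` near the diagonal point `a - conj a`, where `f` is holomorphic. The weights
annihilate constants and linear functions, so `Q(s, t)` only sees the remainders of the mixed
second differences of `f`, which are `o(‖s‖ ‖t‖)` while the weights have size `‖s‖⁻¹, ‖t‖⁻¹`;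
hence `Q(s, t) → 0` and the difference quotients at `z` are Cauchy.
-/

open Filter Topology ComplexOrder
open ComplexConjugate Asymptotics

theorem Complex.sq_norm_le_re_mul_re_of_forall_nonneg {Q B B' d : ℂ}
    (h : ∀ l m : ℂ, 0 ≤ Q * l * conj l + B * l * conj m + B' * m * conj l + d * m * conj m) :
    ‖B‖ ^ 2 ≤ Q.re * d.re := by
  obtain ⟨hQre, hQim⟩ := Complex.le_def.mp (by simpa using h 1 0)
  obtain ⟨hdre, hdim⟩ := Complex.le_def.mp (by simpa using h 0 1)
  have h11 := (Complex.le_def.mp (h 1 1)).2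
  have hI1 := (Complex.le_def.mp (h Complex.I 1)).2
  simp only [Complex.zero_re, Complex.zero_im] at hQre hQim hdre hdim
  have hB' : B' = conj B := by
    apply Complex.ext <;>
      simp only [Complex.add_im, Complex.mul_im, Complex.mul_re, Complex.conj_I, Complex.conj_re,
        Complex.conj_im, Complex.I_re, Complex.I_im, ← hQim, ← hdim, map_one, mul_one, mul_neg,
        mul_zero, Complex.neg_im, Complex.zero_im, sub_self, neg_zero, zero_add, add_zero]
        at h11 hI1 ⊢ <;>
      linarith
  subst hB'
  have hquad : ∀ t : ℝ, 0 ≤ Q.re * (t * t) + (-2 * ‖B‖ ^ 2) * t + d.re * ‖B‖ ^ 2 := by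
    intro t
    have := (Complex.le_def.mp (h t (-B))).1
    simp only [Complex.add_re, Complex.mul_re, Complex.mul_im, Complex.neg_re, Complex.conj_re,
      Complex.conj_im, Complex.ofReal_re, Complex.ofReal_im, Complex.conj_ofReal, Complex.zero_re,
      ← hQim, ← hdim, Complex.sq_norm, Complex.normSq_apply, map_neg, mul_neg, neg_mul, neg_neg,
      mul_zero, zero_mul, sub_zero, add_zero, zero_add, sub_neg_eq_add] at this ⊢
    linarith
  have hdisc := discrim_le_zero hquad
  rw [discrim] at hdisc
  rcases (sq_nonneg ‖B‖).eq_or_lt with hB | hB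
  · rw [← hB]; exact mul_nonneg hQre hdre
  · nlinarith

def IsPosDefKernelOn {α : Type*} (k : α → α → ℂ) (s : Set α) : Prop :=
  ∀ (n : ℕ) (x : Fin n → α), (∀ i, x i ∈ s) → ∀ ξ : Fin n → ℂ,
    0 ≤ ∑ i, ∑ j, k (x i) (x j) * ξ i * conj (ξ j)

theorem IsPosDefKernelOn.sq_norm_sum_le {α : Type*} {k : α → α → ℂ} {s : Set α}
    (hk : IsPosDefKernelOn k s) {m n : ℕ} {x : Fin m → α} {y : Fin n → α}
    (hx : ∀ i, x i ∈ s) (hy : ∀ j, y j ∈ s) (u : Fin m → ℂ) (v : Fin n → ℂ) :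
    ‖∑ i, ∑ j, k (x i) (y j) * u i * conj (v j)‖ ^ 2 ≤
      (∑ i, ∑ j, k (x i) (x j) * u i * conj (u j)).re *
        (∑ i, ∑ j, k (y i) (y j) * v i * conj (v j)).re := by
  refine Complex.sq_norm_le_re_mul_re_of_forall_nonneg
    (B' := ∑ i, ∑ j, k (y i) (x j) * v i * conj (u j)) fun l l' => ?_
  have h := hk (m + n) (Fin.append x y) (Fin.addCases (by simpa using hx) (by simpa using hy))
    (Fin.append (l • u) (l' • v))
  simp only [Fin.sum_univ_add, Fin.append_left, Fin.append_right, Finset.sum_add_distrib,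
    Pi.smul_apply, smul_eq_mul, map_mul] at h
  have hblock {p q : ℕ} (w : Fin p → α) (z : Fin q → α) (a : Fin p → ℂ) (b : Fin q → ℂ)
      (c c' : ℂ) :
      ∑ i, ∑ j, k (w i) (z j) * (c * a i) * (conj c' * conj (b j)) =
        (∑ i, ∑ j, k (w i) (z j) * a i * conj (b j)) * c * conj c' := by
    simp only [Finset.sum_mul]
    exact Finset.sum_congr rfl fun _ _ => Finset.sum_congr rfl fun _ _ => by ring
  rw [hblock, hblock, hblock, hblock] at h
  convert h using 1
  ring

section MixedSecondDifference

variable {𝕜 F : Type*} [RCLike 𝕜] [NormedAddCommGroup F] [NormedSpace 𝕜 F]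

theorem Convex.norm_image_sub_sub_smul_le {φ φ' : 𝕜 → F} {s : Set 𝕜} {c : F} {C : ℝ}
    (hφ : ∀ y ∈ s, HasDerivWithinAt φ (φ' y) s y) (hbound : ∀ y ∈ s, ‖φ' y - c‖ ≤ C)
    (hs : Convex ℝ s) {a b : 𝕜} (ha : a ∈ s) (hb : b ∈ s) :
    ‖φ b - φ a - (b - a) • c‖ ≤ C * ‖b - a‖ := by
  have hψ : ∀ y ∈ s, HasDerivWithinAt (fun y => φ y - y • c) (φ' y - c) s y := fun y hy => by
    have := (hφ y hy).sub ((hasDerivWithinAt_id y s).smul_const c)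
    rwa [one_smul] at this
  convert hs.norm_image_sub_le_of_norm_hasDerivWithin_le hψ hbound ha hb using 2
  simp only [sub_smul]
  abel

theorem AnalyticAt.isLittleO_mixed_second_difference [CompleteSpace F] {f : 𝕜 → F} {x : 𝕜}
    (hf : AnalyticAt 𝕜 f x) :
    (fun p : 𝕜 × 𝕜 => f (x + p.1 + p.2) - f (x + p.1) - f (x + p.2) + f x -
        (p.1 * p.2) • deriv (deriv f) x) =o[𝓝 0] fun p => p.1 * p.2 := by
  refine IsLittleO.of_bound fun ε hε => ?_
  obtain ⟨ρ, hρ, hball⟩ := Metric.eventually_nhds_iff_ball.mp <| hf.eventually_analyticAt.and <|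
    hf.deriv.deriv.continuousAt.eventually (Metric.closedBall_mem_nhds _ hε)
  have hf' : ∀ y ∈ Metric.ball x ρ, HasDerivAt f (deriv f y) y := fun y hy =>
    (hball y hy).1.differentiableAt.hasDerivAt
  have hf'' : ∀ y ∈ Metric.ball x ρ, HasDerivAt (deriv f) (deriv (deriv f) y) y := fun y hy =>
    (hball y hy).1.deriv.differentiableAt.hasDerivAt
  have hclose : ∀ y ∈ Metric.ball x ρ, ‖deriv (deriv f) y - deriv (deriv f) x‖ ≤ ε :=
    fun y hy => by simpa [dist_eq_norm] using (hball y hy).2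
  have hρ2 : Metric.ball x (ρ / 2) ⊆ Metric.ball x ρ := Metric.ball_subset_ball (by linarith)
  filter_upwards [Metric.ball_mem_nhds (0 : 𝕜 × 𝕜) (half_pos hρ)] with ⟨s, t⟩ hst
  rw [mem_ball_zero_iff, Prod.norm_def, max_lt_iff] at hst
  have hshift : ∀ w ∈ Metric.ball x (ρ / 2), w + t ∈ Metric.ball x ρ := fun w hw => by
    rw [Metric.mem_ball, dist_eq_norm] at hw ⊢
    calc ‖w + t - x‖ ≤ ‖w - x‖ + ‖t‖ := by rw [add_sub_right_comm]; exact norm_add_le _ _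
      _ < ρ := by linarith [hst.2]
  have hderiv_diff : ∀ w ∈ Metric.ball x (ρ / 2),
      ‖deriv f (w + t) - deriv f w - t • deriv (deriv f) x‖ ≤ ε * ‖t‖ := fun w hw => by
    simpa using (convex_ball x ρ).norm_image_sub_sub_smul_le
      (fun y hy => (hf'' y hy).hasDerivWithinAt) hclose (hρ2 hw) (hshift w hw)
  have hmain := (convex_ball x (ρ / 2)).norm_image_sub_sub_smul_le
    (φ := fun w => f (w + t) - f w) (c := t • deriv (deriv f) x) (b := x + s)
    (fun w hw => (((hf' _ (hshift w hw)).comp_add_const w t).sub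
      (hf' w (hρ2 hw))).hasDerivWithinAt) hderiv_diff
    (Metric.mem_ball_self (half_pos hρ)) (by simpa [dist_eq_norm] using hst.1)
  simp only [add_sub_cancel_left, smul_smul] at hmain
  rw [norm_mul, mul_comm ‖s‖, ← mul_assoc]
  convert hmain using 2
  abel

end MixedSecondDifference

theorem eventually_norm_lt_nhdsNE_prod_nhdsNE {𝕜 : Type*} [NontriviallyNormedField 𝕜]
    {δ : ℝ} (hδ : 0 < δ) : ∀ᶠ q : 𝕜 × 𝕜 in 𝓝[≠] 0 ×ˢ 𝓝[≠] 0, ‖q‖ < δ := by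
  rw [← nhdsWithin_prod_eq]
  filter_upwards [nhdsWithin_le_nhds (Metric.ball_mem_nhds (0 : 𝕜 × 𝕜) hδ)] with q hq
  exact mem_ball_zero_iff.mp hq

theorem norm_sum_sum_mul_conj_le_of_moments {ι : Type*} [Fintype ι] (K : ι → ι → ℂ)
    (α β p u : ι → ℂ) (c : ℂ) {ε : ℝ} (hu : ∑ i, u i = 0) (hup : ∑ i, u i * p i = 0)
    (hK : ∀ i j, ‖K i j - α i - β j + c * p i * conj (p j)‖ ≤ ε * (‖p i‖ * ‖p j‖)) :
    ‖∑ i, ∑ j, K i j * u i * conj (u j)‖ ≤ ε * (∑ i, ‖u i‖ * ‖p i‖) ^ 2 := by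
  have hsplit : ∀ i j, K i j * u i * conj (u j) =
      (K i j - α i - β j + c * p i * conj (p j)) * u i * conj (u j) +
        α i * u i * conj (u j) + u i * (β j * conj (u j)) - c * (u i * p i) * conj (u j * p j) :=
    fun i j => by simp only [map_mul]; ring
  have hconj : ∑ j, conj (u j) = 0 := by rw [← map_sum, hu, map_zero]
  have hconj' : ∑ j, conj (u j * p j) = 0 := by rw [← map_sum, hup, map_zero]
  simp only [hsplit, Finset.sum_add_distrib, Finset.sum_sub_distrib, ← Finset.mul_sum,
    ← Finset.sum_mul, hconj, hconj', hu, mul_zero, zero_mul, add_zero, sub_zero]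
  calc ‖∑ i, ∑ j, (K i j - α i - β j + c * p i * conj (p j)) * u i * conj (u j)‖
      ≤ ∑ i, ∑ j, ε * (‖p i‖ * ‖p j‖) * ‖u i‖ * ‖u j‖ := by
        refine (norm_sum_le _ _).trans (Finset.sum_le_sum fun i _ => ?_)
        refine (norm_sum_le _ _).trans (Finset.sum_le_sum fun j _ => ?_)
        rw [norm_mul, norm_mul, Complex.norm_conj]
        gcongr
        exact hK i j
    _ = ε * (∑ i, ‖u i‖ * ‖p i‖) ^ 2 := by
        rw [sq, Finset.sum_mul_sum, Finset.mul_sum]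
        exact Finset.sum_congr rfl fun i _ => by
          rw [Finset.mul_sum]; exact Finset.sum_congr rfl fun j _ => by ring

noncomputable def slopeDiffNodes (s t : ℂ) : Fin 3 → ℂ := ![s, t, 0]

noncomputable def slopeDiffWeights (s t : ℂ) : Fin 3 → ℂ := ![s⁻¹, -t⁻¹, t⁻¹ - s⁻¹]

theorem sum_slopeDiffWeights (s t : ℂ) : ∑ i, slopeDiffWeights s t i = 0 := by
  simp only [slopeDiffWeights, Fin.sum_univ_three, Matrix.cons_val_zero, Matrix.cons_val_one,
    Matrix.cons_val]
  ring

theorem sum_slopeDiffWeights_mul_nodes {s t : ℂ} (hs : s ≠ 0) (ht : t ≠ 0) :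
    ∑ i, slopeDiffWeights s t i * slopeDiffNodes s t i = 0 := by
  simp [slopeDiffWeights, slopeDiffNodes, Fin.sum_univ_three, hs, ht]

theorem sum_norm_slopeDiffWeights_mul_norm_nodes {s t : ℂ} (hs : s ≠ 0) (ht : t ≠ 0) :
    ∑ i, ‖slopeDiffWeights s t i‖ * ‖slopeDiffNodes s t i‖ = 2 := by
  simp only [slopeDiffWeights, slopeDiffNodes, Fin.sum_univ_three, Matrix.cons_val_zero,
    Matrix.cons_val_one, Matrix.cons_val, norm_inv, norm_neg, norm_zero, mul_zero, add_zero,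
    inv_mul_cancel₀ (norm_ne_zero_iff.mpr hs), inv_mul_cancel₀ (norm_ne_zero_iff.mpr ht)]
  norm_num

theorem sum_apply_slopeDiffNodes_mul_weights (φ : ℂ → ℂ) (s t : ℂ) :
    ∑ i, φ (slopeDiffNodes s t i) * slopeDiffWeights s t i =
      s⁻¹ * (φ s - φ 0) - t⁻¹ * (φ t - φ 0) := by
  simp [slopeDiffWeights, slopeDiffNodes, Fin.sum_univ_three]
  ring

theorem norm_slopeDiffNodes_le (q : ℂ × ℂ) (i : Fin 3) :
    ‖slopeDiffNodes q.1 q.2 i‖ ≤ ‖q‖ := by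
  fin_cases i <;> simp [slopeDiffNodes, norm_fst_le, norm_snd_le]

theorem AnalyticAt.tendsto_sum_sum_slopeDiffWeights {f : ℂ → ℂ} {z₀ : ℂ}
    (hf : AnalyticAt ℂ f z₀) :
    Tendsto (fun q : ℂ × ℂ => ∑ i, ∑ j,
      f (z₀ + slopeDiffNodes q.1 q.2 i - conj (slopeDiffNodes q.1 q.2 j)) *
        slopeDiffWeights q.1 q.2 i * conj (slopeDiffWeights q.1 q.2 j))
      (𝓝[≠] 0 ×ˢ 𝓝[≠] 0) (𝓝 0) := by
  rw [Metric.tendsto_nhds]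
  intro ε hε
  obtain ⟨δ, hδ, hR⟩ := Metric.eventually_nhds_iff.mp <|
    hf.isLittleO_mixed_second_difference.bound (by positivity : 0 < ε / 8)
  have h0 : ∀ᶠ x : ℂ in 𝓝[≠] 0, x ≠ 0 := self_mem_nhdsWithin
  filter_upwards [(h0.prod_mk h0).and (eventually_norm_lt_nhdsNE_prod_nhdsNE hδ)]
    with q ⟨⟨hs, ht⟩, hq⟩
  set p := slopeDiffNodes q.1 q.2
  have hK : ∀ i j, ‖f (z₀ + p i - conj (p j)) - (f (z₀ + p i) - f z₀) - f (z₀ - conj (p j)) +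
      deriv (deriv f) z₀ * p i * conj (p j)‖ ≤ ε / 8 * (‖p i‖ * ‖p j‖) := fun i j => by
    have hpq : dist (p i, -conj (p j)) 0 < δ := by
      rw [dist_zero_right, Prod.norm_def, max_lt_iff, norm_neg, Complex.norm_conj]
      exact ⟨(norm_slopeDiffNodes_le q i).trans_lt hq, (norm_slopeDiffNodes_le q j).trans_lt hq⟩
    refine Eq.trans_le ?_ ((hR hpq).trans_eq ?_)
    · congr 1
      simp only [smul_eq_mul, ← sub_eq_add_neg]
      ring
    · simp
  rw [dist_zero_right]
  refine (norm_sum_sum_mul_conj_le_of_moments _ _ _ _ _ _ (sum_slopeDiffWeights _ _)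
    (sum_slopeDiffWeights_mul_nodes hs ht) hK).trans_lt ?_
  rw [sum_norm_slopeDiffWeights_mul_norm_nodes hs ht]
  linarith

theorem differentiableAt_of_tendsto_slope_sub_slope {𝕜 F : Type*} [NontriviallyNormedField 𝕜]
    [NormedAddCommGroup F] [NormedSpace 𝕜 F] [CompleteSpace F] {f : 𝕜 → F} {x : 𝕜}
    (h : Tendsto (fun q : 𝕜 × 𝕜 => q.1⁻¹ • (f (x + q.1) - f x) - q.2⁻¹ • (f (x + q.2) - f x))
      (𝓝[≠] 0 ×ˢ 𝓝[≠] 0) (𝓝 0)) :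
    DifferentiableAt 𝕜 f x := by
  obtain ⟨f', hf'⟩ := cauchy_map_iff_exists_tendsto.mp <|
    (IsUniformAddGroup.cauchy_map_iff_tendsto _ fun t : 𝕜 => t⁻¹ • (f (x + t) - f x)).mpr
      ⟨inferInstance, h⟩
  exact (hasDerivAt_iff_tendsto_slope_zero.mpr hf').differentiableAt

theorem IsPosDefKernelOn.tendsto_slope_sub_slope {Ω : Set ℂ} {f : ℂ → ℂ}
    (hpd : IsPosDefKernelOn (fun x y => f (x - conj y)) Ω) {a b : ℂ} (ha : Ω ∈ 𝓝 a)
    (hb : b ∈ Ω) (hf : AnalyticAt ℂ f (a - conj a)) :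
    Tendsto (fun q : ℂ × ℂ => q.1⁻¹ • (f (a - conj b + q.1) - f (a - conj b)) -
      q.2⁻¹ • (f (a - conj b + q.2) - f (a - conj b))) (𝓝[≠] 0 ×ˢ 𝓝[≠] 0) (𝓝 0) := by
  obtain ⟨ρ, hρ, hball⟩ := Metric.mem_nhds_iff.mp ha
  have hbound := (hf.tendsto_sum_sum_slopeDiffWeights.norm.mul_const ‖f (b - conj b)‖).sqrt
  rw [norm_zero, zero_mul, Real.sqrt_zero] at hbound
  refine squeeze_zero_norm' ?_ hbound
  filter_upwards [eventually_norm_lt_nhdsNE_prod_nhdsNE hρ] with q hq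
  have hnodes : ∀ i, a + slopeDiffNodes q.1 q.2 i ∈ Ω := fun i => hball <| by
    rw [Metric.mem_ball, dist_eq_norm, add_sub_cancel_left]
    exact (norm_slopeDiffNodes_le q i).trans_lt hq
  have hCS := hpd.sq_norm_sum_le hnodes (y := ![b]) (by simpa using hb)
    (slopeDiffWeights q.1 q.2) ![1]
  have hshift : ∀ u v : ℂ, a + u - conj (a + v) = a - conj a + u - conj v := fun u v => by
    rw [map_add]; ring
  simp only [hshift, Fin.sum_univ_one, Matrix.cons_val_zero, map_one, mul_one,
    add_sub_right_comm a _ (conj b)] at hCS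
  rw [sum_apply_slopeDiffNodes_mul_weights (fun w => f (a - conj b + w)), add_zero] at hCS
  simp only [smul_eq_mul]
  rw [Real.le_sqrt (norm_nonneg _) (by positivity)]
  refine hCS.trans ((le_abs_self _).trans ?_)
  rw [abs_mul]
  exact mul_le_mul (Complex.abs_re_le_norm _) (Complex.abs_re_le_norm _) (abs_nonneg _)
    (norm_nonneg _)

theorem stmt18_general (Ω : Set ℂ) (hΩ : IsOpen Ω)
    (S : Set ℂ) (hS : S = {z | ∃ x ∈ Ω, ∃ y ∈ Ω, z = x - (starRingEnd ℂ) y})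
    (f : ℂ → ℂ)
    (hpd : ∀ (n : ℕ) (x : Fin n → ℂ), (∀ i, x i ∈ Ω) → ∀ ξ : Fin n → ℂ,
      0 ≤ ∑ i, ∑ j, f (x i - (starRingEnd ℂ) (x j)) * ξ i * (starRingEnd ℂ) (ξ j))
    (U : Set ℂ) (hUopen : IsOpen U)
    (hdiag : ∀ x ∈ Ω, x - (starRingEnd ℂ) x ∈ U)
    (hhol : ∀ z ∈ U, DifferentiableAt ℂ f z) :
    ∀ z ∈ S, DifferentiableAt ℂ f z := by
  subst hS
  rintro _ ⟨a, ha, b, hb, rfl⟩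
  have hf : AnalyticAt ℂ f (a - conj a) :=
    DifferentiableOn.analyticAt (fun u hu => (hhol u hu).differentiableWithinAt)
      (hUopen.mem_nhds (hdiag a ha))
  exact differentiableAt_of_tendsto_slope_sub_slope <|
    IsPosDefKernelOn.tendsto_slope_sub_slope hpd (hΩ.mem_nhds ha) hb hf

/-- Let `Ω ⊆ ℂ` be open, `S = codiff(Ω) = {x − conj y : x, y ∈ Ω}` and
`f` a positive definite function on `S`.  If `f` is holomorphic on an open set `U` with
`D_Ω(S) ⊆ U ⊆ S`, then `f` is holomorphic on all of `S`. -/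
theorem stmt18 (Ω : Set ℂ) (hΩ : IsOpen Ω)
    (S : Set ℂ) (hS : S = {z | ∃ x ∈ Ω, ∃ y ∈ Ω, z = x - (starRingEnd ℂ) y})
    (f : ℂ → ℂ)
    (hpd : ∀ (n : ℕ) (x : Fin n → ℂ), (∀ i, x i ∈ Ω) → ∀ ξ : Fin n → ℂ,
      0 ≤ ∑ i, ∑ j, f (x i - (starRingEnd ℂ) (x j)) * ξ i * (starRingEnd ℂ) (ξ j))
    (U : Set ℂ) (hUopen : IsOpen U)
    (hdiag : ∀ x ∈ Ω, x - (starRingEnd ℂ) x ∈ U) (hUsub : U ⊆ S)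
    (hhol : ∀ z ∈ U, DifferentiableAt ℂ f z) :
    ∀ z ∈ S, DifferentiableAt ℂ f z :=
  stmt18_general Ω hΩ S hS f hpd U hUopen hdiag hhol
end
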